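/- The entropy (in bits) of a multinomial distribution with n = K_a trials over M = 2^J uniform categories equals J·K_a − log₂(K_a!) + 2^J · Σ_{t=0}^{K_a} C(K_a, t) (2^{-J})^t (1 − 2^{-J})^{K_a − t} log₂(t!). -/

import Mathlib

/-!
Write `M = 2^J` and `p z = multinomial z / M^K`. Then
`-logb 2 (p z) = K J - logb 2 K! + ∑ i, logb 2 (z i)!`, so the entropy is
`K J - logb 2 K! + ∑ i, E[logb 2 (z i)!]`. Each coordinate `z i` of the uniform multinomial
distribution is binomial with parameters `K` and `1/M`: the number of `z` with `z i = t`,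
weighted by multinomial coefficients, is `choose K t * (M - 1)^(K - t)`. All `M` expectations
are therefore equal to the binomial sum in the statement.
-/

open Finset Real Nat

section Multinomial

variable {ι : Type*} [Fintype ι] [DecidableEq ι]

lemma piFinset_range_filter_sum_eq_piAntidiag (n : ℕ) :
    (Fintype.piFinset fun _ : ι => range (n + 1)).filter (fun z : ι → ℕ => ∑ i, z i = n)
      = piAntidiag univ n := by
  ext z
  simp only [mem_filter, Fintype.mem_piFinset, mem_range, Nat.lt_succ_iff, mem_piAntidiag,
    mem_univ, implies_true, and_true, and_iff_right_iff_imp]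
  rintro rfl i
  exact single_le_sum (fun j _ => Nat.zero_le (z j)) (mem_univ i)

lemma sum_multinomial_piAntidiag_univ (n : ℕ) :
    ∑ z ∈ piAntidiag (univ : Finset ι) n, multinomial univ z = Fintype.card ι ^ n := by
  simpa using (sum_pow_eq_sum_piAntidiag (univ : Finset ι) (fun _ => (1 : ℕ)) n).symm

/- Compare the coefficients of `X ^ t` in the multinomial expansion of
`(X + 1 + ⋯ + 1) ^ n`, with `X` in position `i₀`. -/
open Polynomial in
lemma sum_multinomial_piAntidiag_univ_filter_apply_eq (i₀ : ι) (n t : ℕ) :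
    ∑ z ∈ (piAntidiag univ n).filter (fun z => z i₀ = t), multinomial univ z
      = n.choose t * (Fintype.card ι - 1) ^ (n - t) := by
  have hsum : ∑ i, (if i = i₀ then X else 1 : ℕ[X]) = X + C (Fintype.card ι - 1) := by
    rw [sum_ite, filter_eq', filter_ne']
    simp [card_erase_of_mem]
  have hprod (z : ι → ℕ) : ∏ i, (if i = i₀ then X else 1 : ℕ[X]) ^ z i = X ^ z i₀ :=
    (Fintype.prod_eq_single i₀ fun i hi => by simp [hi]).trans (by simp)
  have key := congrArg (coeff · t)
    (sum_pow_eq_sum_piAntidiag univ (fun i => if i = i₀ then (X : ℕ[X]) else 1) n)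
  simp only [hsum, hprod, coeff_X_add_C_pow, finsetSum_coeff, coeff_natCast_mul, coeff_X_pow,
    mul_ite, mul_one, mul_zero, Nat.cast_id, @eq_comm _ t] at key
  rw [sum_filter, mul_comm, key]

noncomputable def uniformMultinomial (n : ℕ) (z : ι → ℕ) : ℝ :=
  multinomial univ z / (Fintype.card ι : ℝ) ^ n

lemma uniformMultinomial_eq_factorial_div {n : ℕ} {z : ι → ℕ} (hz : z ∈ piAntidiag univ n) :
    uniformMultinomial n z = n ! / (∏ i, (z i)! : ℝ) / (Fintype.card ι : ℝ) ^ n := by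
  obtain ⟨rfl, -⟩ := mem_piAntidiag.1 hz
  rw [uniformMultinomial]
  congr 1
  rw [eq_div_iff (by positivity), mul_comm]
  exact_mod_cast multinomial_spec univ z

lemma sum_uniformMultinomial [Nonempty ι] (n : ℕ) :
    ∑ z ∈ piAntidiag (univ : Finset ι) n, uniformMultinomial n z = 1 := by
  unfold uniformMultinomial
  rw [← sum_div, ← Nat.cast_sum, sum_multinomial_piAntidiag_univ]
  push_cast
  exact div_self (by positivity)

lemma sum_uniformMultinomial_filter_apply_eq (i₀ : ι) {n t : ℕ} (ht : t ≤ n) :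
    ∑ z ∈ (piAntidiag univ n).filter (fun z => z i₀ = t), uniformMultinomial n z
      = n.choose t * (Fintype.card ι : ℝ)⁻¹ ^ t
          * (1 - (Fintype.card ι : ℝ)⁻¹) ^ (n - t) := by
  have hcard : 1 ≤ Fintype.card ι := Fintype.card_pos_iff.2 ⟨i₀⟩
  have hM : (Fintype.card ι : ℝ) ≠ 0 := by positivity
  have hsplit : (Fintype.card ι : ℝ) ^ n
      = (Fintype.card ι : ℝ) ^ t * (Fintype.card ι : ℝ) ^ (n - t) := by
    rw [← pow_add, Nat.add_sub_cancel' ht]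
  unfold uniformMultinomial
  rw [← sum_div, ← Nat.cast_sum, sum_multinomial_piAntidiag_univ_filter_apply_eq, hsplit,
    ← one_div, one_sub_div hM, div_pow, div_pow, one_pow]
  push_cast [hcard]
  field_simp

lemma sum_uniformMultinomial_mul_apply (i₀ : ι) (n : ℕ) (g : ℕ → ℝ) :
    ∑ z ∈ piAntidiag univ n, uniformMultinomial n z * g (z i₀)
      = ∑ t ∈ range (n + 1), n.choose t * (Fintype.card ι : ℝ)⁻¹ ^ t
          * (1 - (Fintype.card ι : ℝ)⁻¹) ^ (n - t) * g t := by
  have hmaps : ∀ z ∈ piAntidiag univ n, z i₀ ∈ range (n + 1) := fun z hz => by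
    obtain ⟨rfl, -⟩ := mem_piAntidiag.1 hz
    exact mem_range_succ_iff.2 (single_le_sum (fun i _ => Nat.zero_le (z i)) (mem_univ i₀))
  rw [← sum_fiberwise_of_maps_to hmaps]
  refine sum_congr rfl fun t ht => ?_
  rw [← sum_uniformMultinomial_filter_apply_eq i₀ (mem_range_succ_iff.1 ht), sum_mul]
  exact sum_congr rfl fun z hz => by rw [(mem_filter.1 hz).2]

lemma logb_uniformMultinomial [Nonempty ι] (b : ℝ) {n : ℕ} {z : ι → ℕ}
    (hz : z ∈ piAntidiag univ n) :
    logb b (uniformMultinomial n z)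
      = logb b n ! - ∑ i, logb b (z i)! - n * logb b (Fintype.card ι) := by
  rw [uniformMultinomial_eq_factorial_div hz, logb_div (by positivity) (by positivity),
    logb_div (by positivity) (by positivity), logb_prod _ _ (fun i _ => by positivity), logb_pow]

theorem neg_sum_uniformMultinomial_mul_logb [Nonempty ι] (b : ℝ) (n : ℕ) :
    -∑ z ∈ piAntidiag (univ : Finset ι) n,
        uniformMultinomial n z * logb b (uniformMultinomial n z)
      = n * logb b (Fintype.card ι) - logb b n !
        + Fintype.card ι * ∑ t ∈ range (n + 1), n.choose t * (Fintype.card ι : ℝ)⁻¹ ^ t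
            * (1 - (Fintype.card ι : ℝ)⁻¹) ^ (n - t) * logb b t ! := by
  obtain ⟨i₀⟩ := ‹Nonempty ι›
  calc -∑ z ∈ piAntidiag (univ : Finset ι) n,
          uniformMultinomial n z * logb b (uniformMultinomial n z)
      = ∑ z ∈ piAntidiag univ n,
            uniformMultinomial n z * (n * logb b (Fintype.card ι) - logb b n !)
        + ∑ i, ∑ z ∈ piAntidiag univ n, uniformMultinomial n z * logb b (z i)! := by
        rw [sum_comm, ← sum_add_distrib, ← sum_neg_distrib]
        refine sum_congr rfl fun z hz => ?_
        rw [logb_uniformMultinomial b hz, ← mul_sum]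
        ring
    _ = _ := by
        rw [← sum_mul, sum_uniformMultinomial, one_mul]
        simp only [sum_uniformMultinomial_mul_apply _ n (fun t => logb b t !), sum_const,
          Finset.card_univ, nsmul_eq_mul]

end Multinomial

theorem stmt_4_general (Ka J : ℕ) :
    -∑ z ∈ (Fintype.piFinset fun _ : Fin (2 ^ J) => Finset.range (Ka + 1)).filter
        (fun z => (∑ i, z i) = Ka),
      ((2 : ℝ) ^ (-(Ka * J : ℝ)) * (Nat.factorial Ka : ℝ) / ∏ i, (Nat.factorial (z i) : ℝ))
        * Real.logb 2
          ((2 : ℝ) ^ (-(Ka * J : ℝ)) * (Nat.factorial Ka : ℝ) / ∏ i, (Nat.factorial (z i) : ℝ))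
    = (J : ℝ) * Ka - Real.logb 2 (Nat.factorial Ka : ℝ)
      + 2 ^ J * ∑ t ∈ Finset.range (Ka + 1),
          (Ka.choose t : ℝ) * ((2 : ℝ) ^ (-(J : ℝ))) ^ t
            * (1 - (2 : ℝ) ^ (-(J : ℝ))) ^ (Ka - t)
            * Real.logb 2 (Nat.factorial t : ℝ) := by
  have hp : ∀ z ∈ piAntidiag (univ : Finset (Fin (2 ^ J))) Ka,
      (2 : ℝ) ^ (-(Ka * J : ℝ)) * Ka ! / ∏ i, ((z i)! : ℝ) = uniformMultinomial Ka z := by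
    intro z hz
    rw [uniformMultinomial_eq_factorial_div hz, Fintype.card_fin, Nat.cast_pow, ← pow_mul,
      rpow_neg zero_le_two, ← Nat.cast_mul, rpow_natCast, Nat.cast_ofNat]
    ring
  have hinv : (2 : ℝ) ^ (-(J : ℝ)) = (2 ^ J)⁻¹ := by rw [rpow_neg zero_le_two, rpow_natCast]
  rw [piFinset_range_filter_sum_eq_piAntidiag, sum_congr rfl fun z hz => by rw [hp z hz],
    neg_sum_uniformMultinomial_mul_logb, Fintype.card_fin, hinv, Nat.cast_pow, Nat.cast_ofNat,
    logb_pow, logb_self_eq_one one_lt_two]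
  ring

/-- Entropy (in bits) of the multinomial distribution with `K_a` trials over
`2^J` uniform categories. -/
theorem stmt_4 (Ka J : ℕ) (hKa : 0 < Ka) (hJ : 0 < J) :
    -∑ z ∈ (Fintype.piFinset fun _ : Fin (2 ^ J) => Finset.range (Ka + 1)).filter
        (fun z => (∑ i, z i) = Ka),
      ((2 : ℝ) ^ (-(Ka * J : ℝ)) * (Nat.factorial Ka : ℝ) / ∏ i, (Nat.factorial (z i) : ℝ))
        * Real.logb 2
          ((2 : ℝ) ^ (-(Ka * J : ℝ)) * (Nat.factorial Ka : ℝ) / ∏ i, (Nat.factorial (z i) : ℝ))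
    = (J : ℝ) * Ka - Real.logb 2 (Nat.factorial Ka : ℝ)
      + 2 ^ J * ∑ t ∈ Finset.range (Ka + 1),
          (Ka.choose t : ℝ) * ((2 : ℝ) ^ (-(J : ℝ))) ^ t
            * (1 - (2 : ℝ) ^ (-(J : ℝ))) ^ (Ka - t)
            * Real.logb 2 (Nat.factorial t : ℝ) :=
  stmt_4_general Ka J
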